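/- arXiv:1008.5026 — 3 statements merged into one kernel-verified Lean document; each statement's English description precedes it below -/
import Mathlib

section
/- Let n ≥ 1 and let L be an n×n matrix over ℚ. In the Laurent polynomial ring R = ℚ[u, u⁻¹] equipped with the derivation D extending d/du, set z = u − u⁻¹ and A = z·L + u⁻¹·I_n (an n×n matrix over R), and let Δ = det A. Then u·z·D(Δ) = n·(u + u⁻¹)·Δ − 2·tr(adjugate A) in R. -/
/-!
Write `M = (u - u⁻¹)·L + u⁻¹·I`. Jacobi's formula `D (det M) = tr (adjugate M · D M)` holds for
any derivation, and since `D u = 1` the entrywise derivative of `M` satisfies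
`u (u - u⁻¹) · D M = (u + u⁻¹) · M - 2 · I`. Multiplying Jacobi's formula by `u (u - u⁻¹)` and
using `adjugate M · M = det M · I` gives the identity.
-/

open LaurentPolynomial

/-- The derivation of `ℚ[u,u⁻¹]` extending `d/du`: it sends `∑ aₙ uⁿ` to `∑ n aₙ u^{n-1}`. -/
noncomputable def laurentDeriv (f : LaurentPolynomial ℚ) : LaurentPolynomial ℚ :=
  f.coeff.sum (fun n a => C ((n : ℚ) * a) * T (n - 1))

/-- The matrix `A = z·L + u⁻¹·I` over `ℚ[u,u⁻¹]`, where `z = u − u⁻¹`. -/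
noncomputable def alexMat (n : ℕ) (L : Matrix (Fin n) (Fin n) ℚ) :
    Matrix (Fin n) (Fin n) (LaurentPolynomial ℚ) :=
  ((T 1 - T (-1) : LaurentPolynomial ℚ)) • L.map (fun a => C a) + (T (-1) : LaurentPolynomial ℚ) • (1 : Matrix (Fin n) (Fin n) (LaurentPolynomial ℚ))

namespace Derivation

variable {K S : Type*} [CommRing K] [CommRing S] [Algebra K S] (D : Derivation K S S)

theorem map_prod_eq_sum_prod_update {ι : Type*} [DecidableEq ι] (s : Finset ι) (f : ι → S) :
    D (∏ i ∈ s, f i) = ∑ i ∈ s, ∏ j ∈ s, Function.update f i (D (f i)) j := by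
  induction s using Finset.induction with
  | empty => simp
  | insert a s ha ih =>
    rw [Finset.prod_insert ha, leibniz, ih, Finset.sum_insert ha, Finset.prod_insert ha,
      Finset.smul_sum, smul_eq_mul, add_comm]
    congr 1
    · rw [Finset.prod_update_of_notMem ha, Function.update_self, mul_comm]
    · refine Finset.sum_congr rfl fun i hi => ?_
      rw [Finset.prod_insert ha, Function.update_of_ne (ne_of_mem_of_not_mem hi ha).symm,
        smul_eq_mul]

variable {n : Type*} [DecidableEq n]

theorem map_det_eq_sum_det_updateCol [Fintype n] (M : Matrix n n S) :
    D M.det = ∑ c, (M.updateCol c fun r => D (M r c)).det := by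
  simp only [Matrix.det_apply, map_sum, Units.smul_def, map_zsmul, map_prod_eq_sum_prod_update,
    Finset.smul_sum]
  rw [Finset.sum_comm]
  refine Finset.sum_congr rfl fun c _ => Finset.sum_congr rfl fun σ _ => ?_
  congr 2
  ext i
  rcases eq_or_ne i c with rfl | h <;> simp [*]

theorem map_det [Fintype n] (M : Matrix n n S) : D M.det = (M.adjugate * M.map D).trace := by
  rw [map_det_eq_sum_det_updateCol]
  refine Finset.sum_congr rfl fun c _ => ?_
  rw [← Matrix.cramer_apply, Matrix.cramer_eq_adjugate_mulVec]
  rfl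

theorem map_smul_add_smul_one (a b : S) (L : Matrix n n K) :
    (a • L.map (algebraMap K S) + b • 1).map D = D a • L.map (algebraMap K S) + D b • 1 := by
  ext i j
  rcases eq_or_ne i j with rfl | h <;> simp [*, mul_comm]

variable {u v : S}

theorem mul_sub_smul_map_pencil (huv : u * v = 1) (hDu : D u = 1) {L : Matrix n n K}
    {M : Matrix n n S} (hM : M = (u - v) • L.map (algebraMap K S) + v • 1) :
    (u * (u - v)) • M.map D = (u + v) • M - (2 : S) • 1 := by
  subst hM
  have hDv : D v = -v ^ 2 := by
    rw [D.leibniz_of_mul_eq_one (mul_comm u v ▸ huv), hDu, smul_eq_mul, mul_one]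
  rw [map_smul_add_smul_one, D.map_sub, hDu, hDv]
  ext i j
  rcases eq_or_ne i j with rfl | h
  · simp
    linear_combination ((u - v) * v * algebraMap K S (L i i) - (u * v + 2) + v ^ 2) * huv
  · simp [h]
    linear_combination (u - v) * v * algebraMap K S (L i j) * huv

theorem mul_sub_mul_map_det_pencil [Fintype n] (huv : u * v = 1) (hDu : D u = 1)
    {L : Matrix n n K} {M : Matrix n n S} (hM : M = (u - v) • L.map (algebraMap K S) + v • 1) :
    u * (u - v) * D M.det = Fintype.card n * (u + v) * M.det - 2 * M.adjugate.trace := by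
  calc u * (u - v) * D M.det
      = (M.adjugate * ((u * (u - v)) • M.map D)).trace := by
        rw [map_det, Matrix.mul_smul, Matrix.trace_smul, smul_eq_mul]
    _ = (M.adjugate * ((u + v) • M - (2 : S) • 1)).trace := by
        rw [mul_sub_smul_map_pencil D huv hDu hM]
    _ = (u + v) * (M.adjugate * M).trace - 2 * M.adjugate.trace := by
        simp only [Matrix.mul_sub, Matrix.mul_smul, Matrix.mul_one, Matrix.trace_sub,
          Matrix.trace_smul, smul_eq_mul]
    _ = Fintype.card n * (u + v) * M.det - 2 * M.adjugate.trace := by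
        rw [Matrix.adjugate_mul, Matrix.trace_smul, Matrix.trace_one, smul_eq_mul]
        ring

end Derivation

theorem laurentDeriv_add (f g : ℚ[T;T⁻¹]) :
    laurentDeriv (f + g) = laurentDeriv f + laurentDeriv g := by
  unfold laurentDeriv
  rw [AddMonoidAlgebra.coeff_add]
  exact Finsupp.sum_add_index' (by simp) (by simp [mul_add, add_mul])

theorem laurentDeriv_smul (c : ℚ) (f : ℚ[T;T⁻¹]) :
    laurentDeriv (c • f) = c • laurentDeriv f := by
  unfold laurentDeriv
  rw [AddMonoidAlgebra.coeff_smul, Finsupp.sum_smul_index' (by simp), Finsupp.smul_sum]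
  refine Finset.sum_congr rfl fun n _ => ?_
  dsimp only
  rw [smul_eq_C_mul, ← mul_assoc, ← map_mul, smul_eq_mul, mul_left_comm]

theorem laurentDeriv_C_mul_T (a : ℚ) (m : ℤ) :
    laurentDeriv (C a * T m) = C ((m : ℚ) * a) * T (m - 1) := by
  rw [← single_eq_C_mul_T, laurentDeriv, AddMonoidAlgebra.coeff_single,
    Finsupp.sum_single_index (by simp)]

theorem laurentDeriv_mul (f g : ℚ[T;T⁻¹]) :
    laurentDeriv (f * g) = f * laurentDeriv g + g * laurentDeriv f := by
  have C_mul_T_mul_C_mul_T (a b : ℚ) (m k : ℤ) :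
      C a * T m * (C b * T k) = C (a * b) * T (m + k) := by
    rw [T_add, map_mul]; ring
  induction f using LaurentPolynomial.induction_on' with
  | add p q hp hq => rw [add_mul, laurentDeriv_add, hp, hq, laurentDeriv_add]; ring
  | C_mul_T m a =>
    induction g using LaurentPolynomial.induction_on' with
    | add p q hp hq => rw [mul_add, laurentDeriv_add, hp, hq, laurentDeriv_add]; ring
    | C_mul_T k b =>
      simp only [C_mul_T_mul_C_mul_T, laurentDeriv_C_mul_T]
      rw [show m + (k - 1) = m + k - 1 by ring, show k + (m - 1) = m + k - 1 by ring,
        ← add_mul, ← map_add]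
      congr 2
      push_cast
      ring

noncomputable def laurentDerivation : Derivation ℚ ℚ[T;T⁻¹] ℚ[T;T⁻¹] :=
  Derivation.mk' ⟨⟨laurentDeriv, laurentDeriv_add⟩, laurentDeriv_smul⟩ laurentDeriv_mul

@[simp]
theorem coe_laurentDerivation : ⇑laurentDerivation = laurentDeriv := rfl

theorem laurentDerivation_T_one : laurentDerivation (T 1) = 1 := by
  simpa using laurentDeriv_C_mul_T 1 1

theorem T_one_mul_T_neg_one {R : Type*} [Semiring R] : (T 1 * T (-1) : R[T;T⁻¹]) = 1 := by
  rw [← T_add, add_neg_cancel, T_zero]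

theorem laurent_logderiv_det_identity_general (n : ℕ)
    (L : Matrix (Fin n) (Fin n) ℚ) :
    T 1 * (T 1 - T (-1)) * laurentDeriv (Matrix.det (alexMat n L)) =
      (n : LaurentPolynomial ℚ) * (T 1 + T (-1)) * Matrix.det (alexMat n L) -
        2 * Matrix.trace (Matrix.adjugate (alexMat n L)) := by
  simpa using laurentDerivation.mul_sub_mul_map_det_pencil T_one_mul_T_neg_one
    laurentDerivation_T_one (M := alexMat n L) rfl

/-- For `A = (u − u⁻¹)·L + u⁻¹·I` and `Δ = det A`, one has
`u·(u − u⁻¹)·Δ' = n·(u + u⁻¹)·Δ − 2·tr(adjugate A)` in `ℚ[u,u⁻¹]`. -/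
theorem laurent_logderiv_det_identity (n : ℕ) (hn : 1 ≤ n)
    (L : Matrix (Fin n) (Fin n) ℚ) :
    T 1 * (T 1 - T (-1)) * laurentDeriv (Matrix.det (alexMat n L)) =
      (n : LaurentPolynomial ℚ) * (T 1 + T (-1)) * Matrix.det (alexMat n L) -
        2 * Matrix.trace (Matrix.adjugate (alexMat n L)) :=
  laurent_logderiv_det_identity_general n L
end

section
/- Let r ≥ 1 and let α_1, …, α_r ∈ ℚ with α_r ≠ 0. Define the symmetric Laurent polynomial Δ = 1 − 2∑_{i=1}^r α_i + ∑_{i=1}^r α_i (x^i + x^{-i}) in ℚ[x, x⁻¹], and for k ≥ 1 define p_k = −4·x·Δ'(x)·(x^k − x^{-k}) + 2·Δ(x)·( (k+1)(x^k + x^{-k}) + 2∑_{i=1}^{k-1}(x^i + x^{-i}) + 2 ), where Δ' is the formal derivative of Δ. Then the coefficient of x^{k+r} in p_k equals 2(k + 1 − 2r)·α_r, and the coefficient of x^m in p_k vanishes for all m > k + r. Consequently, p_k has degree exactly k + r whenever k ≠ 2r − 1. -/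
open LaurentPolynomial

/-- The symmetric Laurent polynomial `Δ = 1 − 2∑ αᵢ + ∑ αᵢ (xⁱ + x⁻ⁱ)`. -/
noncomputable def symDelta (r : ℕ) (α : ℕ → ℚ) : LaurentPolynomial ℚ :=
  C (1 - 2 * ∑ i ∈ Finset.Icc 1 r, α i) +
    ∑ i ∈ Finset.Icc 1 r, C (α i) * (T (i : ℤ) + T (-(i : ℤ)))

/-- The Laurent polynomial
`p_k = −4xΔ'(x)(x^k − x^{-k}) + 2Δ(x)((k+1)(x^k + x^{-k}) + 2∑_{i=1}^{k-1}(xⁱ + x⁻ⁱ) + 2)`. -/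
noncomputable def pPoly (Δ : LaurentPolynomial ℚ) (k : ℕ) : LaurentPolynomial ℚ :=
  -4 * (T 1 * laurentDeriv Δ) * (T (k : ℤ) - T (-(k : ℤ))) +
    2 * Δ *
      (C ((k : ℚ) + 1) * (T (k : ℤ) + T (-(k : ℤ))) +
        2 * ∑ i ∈ Finset.Icc 1 (k - 1), (T (i : ℤ) + T (-(i : ℤ))) + 2)

/-!
Only the top term `α_r x^r` of `Δ` reaches degree `k + r` in `p_k`: there `-4 x Δ' x^k` contributes
`-4 r α_r` and `2 Δ (k + 1) x^k` contributes `2 (k + 1) α_r`, while every other product of a term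
of `Δ` with a monomial of `p_k`'s cofactors has degree below `k + r`.
-/

namespace LaurentPolynomial

variable {R : Type*} [Semiring R]

theorem coeff_C_mul_apply (a : R) (f : R[T;T⁻¹]) (m : ℤ) : (C a * f).coeff m = a * f.coeff m :=
  AddMonoidAlgebra.coeff_single_zero_mul f a m

theorem coeff_mul_T_apply (f : R[T;T⁻¹]) (n m : ℤ) : (f * T n).coeff m = f.coeff (m - n) := by
  simpa [sub_eq_add_neg] using AddMonoidAlgebra.coeff_mul_single_apply f 1 n m

theorem coeff_T_mul_apply (n : ℤ) (f : R[T;T⁻¹]) (m : ℤ) :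
    (T n * f).coeff m = f.coeff (m - n) := by
  rw [T_mul, coeff_mul_T_apply]

theorem degree_eq_of_coeff_ne_zero_of_forall_lt {f : R[T;T⁻¹]} {n : ℤ} (hn : f.coeff n ≠ 0)
    (hlt : ∀ m, n < m → f.coeff m = 0) : f.degree = n := by
  refine le_antisymm (Finset.max_le fun m hm => ?_) (Finset.le_max (Finsupp.mem_support_iff.2 hn))
  by_contra! h
  exact Finsupp.mem_support_iff.1 hm (hlt m (WithBot.coe_lt_coe.1 h))

theorem sum_coeff_sub_add_eq_zero_of_lt {f : R[T;T⁻¹]} {d : ℤ} (hf : ∀ m, d < m → f.coeff m = 0)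
    {n : ℕ} {m : ℤ} (hm : d + n < m) :
    ∑ i ∈ Finset.Icc 1 n, (f.coeff (m - i) + f.coeff (m + i)) = 0 :=
  Finset.sum_eq_zero fun i hi => by
    rw [Finset.mem_Icc] at hi
    rw [hf _ (by omega), hf _ (by omega), add_zero]

end LaurentPolynomial

theorem coeff_laurentDeriv (f : ℚ[T;T⁻¹]) (m : ℤ) :
    (laurentDeriv f).coeff m = (m + 1) * f.coeff (m + 1) := by
  simp only [laurentDeriv, ← single_eq_C_mul_T, AddMonoidAlgebra.coeff_finsuppSum,
    AddMonoidAlgebra.coeff_single, Finsupp.sum_apply, Finsupp.single_apply]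
  rw [Finsupp.sum_eq_single (m + 1)]
  · simp
  · intro n _ hn
    rw [if_neg (by omega)]
  · simp

theorem coeff_T_one_mul_laurentDeriv (f : ℚ[T;T⁻¹]) (m : ℤ) :
    (T 1 * laurentDeriv f).coeff m = m * f.coeff m := by
  rw [coeff_T_mul_apply, coeff_laurentDeriv, sub_add_cancel]
  push_cast
  ring

theorem coeff_symDelta_of_pos (r : ℕ) (α : ℕ → ℚ) {m : ℤ} (hm : 0 < m) :
    (symDelta r α).coeff m = ∑ i ∈ Finset.Icc 1 r, if (i : ℤ) = m then α i else 0 := by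
  simp only [symDelta, AddMonoidAlgebra.coeff_add, AddMonoidAlgebra.coeff_sum, Finsupp.add_apply,
    Finset.sum_apply', coeff_C_mul_apply, C_apply, T_apply, if_neg hm.ne']
  refine (zero_add _).trans (Finset.sum_congr rfl fun i hi => ?_)
  rw [if_neg (show -(i : ℤ) ≠ m by omega), add_zero, mul_ite, mul_one, mul_zero]

theorem coeff_symDelta_of_lt (r : ℕ) (α : ℕ → ℚ) {m : ℤ} (hm : r < m) :
    (symDelta r α).coeff m = 0 := by
  rw [coeff_symDelta_of_pos r α (by omega)]
  exact Finset.sum_eq_zero fun i hi => if_neg (by rw [Finset.mem_Icc] at hi; omega)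

theorem coeff_symDelta_self {r : ℕ} (hr : 1 ≤ r) (α : ℕ → ℚ) :
    (symDelta r α).coeff r = α r := by
  simp [coeff_symDelta_of_pos r α (by omega : (0 : ℤ) < r), hr]

theorem coeff_pPoly (Δ : ℚ[T;T⁻¹]) (k : ℕ) (m : ℤ) :
    (pPoly Δ k).coeff m =
      -4 * ((m - k) * Δ.coeff (m - k) - (m + k) * Δ.coeff (m + k)) +
        2 * ((k + 1) * (Δ.coeff (m - k) + Δ.coeff (m + k)) +
          2 * ∑ i ∈ Finset.Icc 1 (k - 1), (Δ.coeff (m - i) + Δ.coeff (m + i)) + 2 * Δ.coeff m) := by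
  have hlin : pPoly Δ k =
      (-4 : ℚ) • (T 1 * laurentDeriv Δ * T k - T 1 * laurentDeriv Δ * T (-k)) +
        (2 : ℚ) • (((k : ℚ) + 1) • (Δ * T k + Δ * T (-k)) +
          (2 : ℚ) • (Δ * ∑ i ∈ Finset.Icc 1 (k - 1), (T i + T (-i))) + (2 : ℚ) • Δ) := by
    simp only [pPoly, smul_eq_C_mul, map_neg, map_ofNat, map_add, map_one, map_natCast]
    ring
  simp only [hlin, Finset.mul_sum, mul_add, AddMonoidAlgebra.coeff_add, AddMonoidAlgebra.coeff_sub,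
    AddMonoidAlgebra.coeff_smul, AddMonoidAlgebra.coeff_sum, Finsupp.add_apply, Finsupp.sub_apply,
    Finsupp.smul_apply, Finset.sum_apply', coeff_mul_T_apply, coeff_T_one_mul_laurentDeriv,
    smul_eq_mul, sub_neg_eq_add, Int.cast_sub, Int.cast_add, Int.cast_natCast]

section

variable {Δ : ℚ[T;T⁻¹]} {d : ℤ} (hΔ : ∀ m, d < m → Δ.coeff m = 0)
include hΔ

theorem coeff_pPoly_eq_zero_of_lt {k : ℕ} {m : ℤ} (hm : k + d < m) : (pPoly Δ k).coeff m = 0 := by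
  rw [coeff_pPoly, hΔ (m - k) (by omega), hΔ (m + k) (by omega), hΔ m (by omega),
    sum_coeff_sub_add_eq_zero_of_lt hΔ (by omega)]
  ring

theorem coeff_pPoly_add {k : ℕ} (hk : 1 ≤ k) :
    (pPoly Δ k).coeff (k + d) = 2 * (k + 1 - 2 * d) * Δ.coeff d := by
  rw [coeff_pPoly, add_sub_cancel_left, hΔ (k + d + k) (by omega), hΔ (k + d) (by omega),
    sum_coeff_sub_add_eq_zero_of_lt hΔ (by omega)]
  push_cast
  ring

end

/-- Leading coefficient computation for `p_k(Δ, Δ)`: the coefficient of `x^{k+r}` is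
`2(k+1−2r)·α_r`, all higher coefficients vanish, and hence `p_k` has degree exactly
`k + r` whenever `k ≠ 2r − 1`. -/
theorem pPoly_leading_coeff (r : ℕ) (hr : 1 ≤ r) (α : ℕ → ℚ) (hα : α r ≠ 0)
    (k : ℕ) (hk : 1 ≤ k) :
    (pPoly (symDelta r α) k).coeff ((k : ℤ) + r) = 2 * ((k : ℚ) + 1 - 2 * r) * α r ∧
    (∀ m : ℤ, (k : ℤ) + r < m → (pPoly (symDelta r α) k).coeff m = 0) ∧
    (k ≠ 2 * r - 1 → (pPoly (symDelta r α) k).degree = ((k : ℤ) + r : ℤ)) := by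
  have hΔ : ∀ m : ℤ, (r : ℤ) < m → (symDelta r α).coeff m = 0 :=
    fun m hm => coeff_symDelta_of_lt r α hm
  have hlead : (pPoly (symDelta r α) k).coeff ((k : ℤ) + r) = 2 * ((k : ℚ) + 1 - 2 * r) * α r := by
    rw [coeff_pPoly_add hΔ hk, coeff_symDelta_self hr, Int.cast_natCast]
  have hhigh : ∀ m : ℤ, (k : ℤ) + r < m → (pPoly (symDelta r α) k).coeff m = 0 :=
    fun m hm => coeff_pPoly_eq_zero_of_lt hΔ hm
  refine ⟨hlead, hhigh, fun hkr => degree_eq_of_coeff_ne_zero_of_forall_lt ?_ hhigh⟩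
  have hfactor : (k : ℚ) + 1 - 2 * r ≠ 0 := by
    rw [sub_ne_zero]
    exact_mod_cast (by omega : k + 1 ≠ 2 * r)
  rw [hlead]
  exact mul_ne_zero (mul_ne_zero two_ne_zero hfactor) hα
end

section
/- Let Δ ∈ ℚ[x, x⁻¹] be a Laurent polynomial such that Δ and x·Δ'(x) generate the unit ideal of ℚ[x, x⁻¹] (i.e. there exist a, b ∈ ℚ[x,x⁻¹] with a·Δ + b·xΔ' = 1), where Δ' is the formal derivative. For k ≥ 1 set p_k = −4·xΔ'(x)·(x^k − x^{-k}) + 2·Δ(x)·( (k+1)(x^k + x^{-k}) + 2∑_{i=1}^{k-1}(x^i + x^{-i}) + 2 ). If there exist s ≥ 1 and β_1, …, β_s ∈ ℚ with Δ(x)² = ∑_{i=1}^s β_i p_i, then Δ divides ∑_{i=1}^s β_i (x^i − x^{-i}) in ℚ[x, x⁻¹]. -/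
open LaurentPolynomial

theorem isUnit_ofNat_of_algebra_rat {A : Type*} [Semiring A] [Algebra ℚ A] (n : ℕ)
    [n.AtLeastTwo] : IsUnit (OfNat.ofNat n : A) := by
  have := (IsUnit.mk0 (OfNat.ofNat n : ℚ) (OfNat.ofNat_ne_zero n)).map (algebraMap ℚ A)
  rwa [map_ofNat] at this

theorem dvd_pPoly_add (Δ : LaurentPolynomial ℚ) (k : ℕ) :
    Δ ∣ pPoly Δ k + 4 * (T 1 * laurentDeriv Δ) * (T (k : ℤ) - T (-(k : ℤ))) := by
  unfold pPoly
  rw [show ∀ a b c : ℚ[T;T⁻¹], -4 * a * b + c + 4 * a * b = c from fun _ _ _ => by ring]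
  exact (dvd_mul_left Δ 2).mul_right _

theorem dvd_sum_C_mul_pPoly_add (Δ : LaurentPolynomial ℚ) (β : ℕ → ℚ) (s : Finset ℕ) :
    Δ ∣ ∑ i ∈ s, C (β i) * pPoly Δ i +
      4 * (T 1 * laurentDeriv Δ) * ∑ i ∈ s, C (β i) * (T (i : ℤ) - T (-(i : ℤ))) := by
  rw [Finset.mul_sum, ← Finset.sum_add_distrib]
  refine Finset.dvd_sum fun i _ => ?_
  convert (dvd_pPoly_add Δ i).mul_left (C (β i)) using 1
  ring

theorem delta_dvd_of_sq_eq_combination_general (Δ : LaurentPolynomial ℚ)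
    (hcop : ∃ a b : LaurentPolynomial ℚ, a * Δ + b * (T 1 * laurentDeriv Δ) = 1)
    (s : ℕ) (β : ℕ → ℚ)
    (heq : Δ ^ 2 = ∑ i ∈ Finset.Icc 1 s, C (β i) * pPoly Δ i) :
    Δ ∣ ∑ i ∈ Finset.Icc 1 s, C (β i) * (T (i : ℤ) - T (-(i : ℤ))) := by
  -- `hcop` is `IsCoprime Δ (T 1 * laurentDeriv Δ)` unfolded.
  have hcop4 : IsCoprime Δ (4 * (T 1 * laurentDeriv Δ)) :=
    (isCoprime_mul_unit_left_right (isUnit_ofNat_of_algebra_rat 4) _ _).mpr hcop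
  have hdvd := dvd_sum_C_mul_pPoly_add Δ β (Finset.Icc 1 s)
  rw [← heq, dvd_add_right (dvd_pow_self Δ two_ne_zero)] at hdvd
  exact hcop4.dvd_of_dvd_mul_left hdvd

/-- If `Δ` and `xΔ'` generate the unit ideal of `ℚ[x,x⁻¹]` and `Δ² = ∑ βᵢ pᵢ`, then
`Δ` divides `∑ βᵢ (xⁱ − x⁻ⁱ)`. -/
theorem delta_dvd_of_sq_eq_combination (Δ : LaurentPolynomial ℚ)
    (hcop : ∃ a b : LaurentPolynomial ℚ, a * Δ + b * (T 1 * laurentDeriv Δ) = 1)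
    (s : ℕ) (hs : 1 ≤ s) (β : ℕ → ℚ)
    (heq : Δ ^ 2 = ∑ i ∈ Finset.Icc 1 s, C (β i) * pPoly Δ i) :
    Δ ∣ ∑ i ∈ Finset.Icc 1 s, C (β i) * (T (i : ℤ) - T (-(i : ℤ))) :=
  delta_dvd_of_sq_eq_combination_general Δ hcop s β heq
end
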